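/- The circuits of the parametric matroid M_X are exactly the equivalence classes P of R with P ⊆ U \ R̲(X). -/

import Mathlib

/-!
The lower approximation `R̲(S)` is the union of the classes contained in `S`. Hence a class `P`
satisfies `R̲(P) = P`, and every proper subset of `P` has empty lower approximation. A dependent set
`C` contains a point `z ∈ R̲(C) \ X`, hence the class `[z]`, which is itself dependent; minimality
forces `C = [z]`. Conversely a class `[x]` is dependent exactly when `[x] ⊄ X`, i.e. when it
misses `R̲(X)`, and then it is minimal because its proper subsets are independent.
-/

open Finset

variable {α : Type*} [Fintype α] [DecidableEq α]

/-- The lower approximation of `S` w.r.t. the equivalence relation `R`: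
`{x : [x]_R ⊆ S}`. -/
def lowerApprox (R : Setoid α) [DecidableRel R.r] (S : Finset α) : Finset α :=
  Finset.univ.filter fun x => ∀ y, R.r x y → y ∈ S


/-- The equivalence class of `x` w.r.t. `R`, as a finset. -/
def cls (R : Setoid α) [DecidableRel R.r] (x : α) : Finset α :=
  Finset.univ.filter fun y => R.r x y

section Classes

variable {β : Type*} [Fintype β] {R : Setoid β} [DecidableRel R.r]

@[simp]
theorem mem_cls {x y : β} : y ∈ cls R x ↔ R x y := by
  simp [cls]

theorem mem_cls_self (x : β) : x ∈ cls R x :=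
  mem_cls.mpr (R.refl x)

theorem cls_eq_of_mem {x y : β} (h : y ∈ cls R x) : cls R y = cls R x := by
  ext z
  simp only [mem_cls] at h ⊢
  exact ⟨R.trans h, R.trans (R.symm h)⟩

end Classes

section LowerApprox

variable {R : Setoid α} [DecidableRel R.r]

@[simp]
theorem mem_lowerApprox {S : Finset α} {x : α} :
    x ∈ lowerApprox R S ↔ ∀ y, R x y → y ∈ S := by
  simp [lowerApprox]

theorem cls_subset_iff_mem_lowerApprox {S : Finset α} {x : α} :
    cls R x ⊆ S ↔ x ∈ lowerApprox R S := by
  simp only [subset_iff, mem_cls, mem_lowerApprox]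

theorem lowerApprox_cls (x : α) : lowerApprox R (cls R x) = cls R x := by
  ext y
  rw [← cls_subset_iff_mem_lowerApprox]
  exact ⟨fun h => cls_eq_of_mem (h (mem_cls_self y)) ▸ mem_cls_self y,
    fun hy => (cls_eq_of_mem hy).le⟩

theorem lowerApprox_eq_empty_of_ssubset_cls {D : Finset α} {x : α} (hD : D ⊂ cls R x) :
    lowerApprox R D = ∅ := by
  refine eq_empty_of_forall_notMem fun y hy => ?_
  have hyD : cls R y ⊆ D := cls_subset_iff_mem_lowerApprox.mpr hy
  rw [cls_eq_of_mem (hD.subset (hyD (mem_cls_self y)))] at hyD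
  exact hD.not_subset hyD

theorem cls_subset_univ_sdiff_lowerApprox_iff {X : Finset α} {x : α} :
    cls R x ⊆ univ \ lowerApprox R X ↔ ¬ cls R x ⊆ X := by
  simp only [subset_sdiff, subset_univ, true_and, disjoint_left, cls_subset_iff_mem_lowerApprox]
  refine ⟨fun h => h (mem_cls_self x), fun hx y hy hyX => hx ?_⟩
  rwa [← cls_subset_iff_mem_lowerApprox, cls_eq_of_mem hy, cls_subset_iff_mem_lowerApprox] at hyX

end LowerApprox

theorem circuits_of_parametric_matroid (R : Setoid α) [DecidableRel R.r] (X : Finset α) :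
    ∀ C : Finset α,
      (¬ lowerApprox R C ⊆ X ∧ ∀ D : Finset α, D ⊂ C → lowerApprox R D ⊆ X) ↔
      ∃ x : α, C = cls R x ∧ C ⊆ Finset.univ \ lowerApprox R X := by
  intro C
  constructor
  · rintro ⟨hdep, hmin⟩
    obtain ⟨z, hzC, hzX⟩ := not_subset.mp hdep
    have hclsC : cls R z ⊆ C := cls_subset_iff_mem_lowerApprox.mpr hzC
    have hcls_dep : ¬ lowerApprox R (cls R z) ⊆ X := by
      rw [lowerApprox_cls]
      exact fun h => hzX (h (mem_cls_self z))
    have hC : C = cls R z :=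
      (eq_of_subset_of_not_ssubset hclsC fun hlt => hcls_dep (hmin _ hlt)).symm
    refine ⟨z, hC, ?_⟩
    rw [hC, cls_subset_univ_sdiff_lowerApprox_iff]
    rwa [lowerApprox_cls] at hcls_dep
  · rintro ⟨x, rfl, hsub⟩
    refine ⟨?_, fun D hD => ?_⟩
    · rw [lowerApprox_cls]
      exact cls_subset_univ_sdiff_lowerApprox_iff.mp hsub
    · rw [lowerApprox_eq_empty_of_ssubset_cls hD]
      exact empty_subset X
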